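/- Let 𝒢 := ((ℌ_n, ω_n))_{n∈ℕ*} be a *-fusion frame of a Hilbert 𝔄-module ℌ. Then the analysis operator 𝒮_𝒢 : ℌ → ℌ, x ↦ ∑_{n=1}^∞ ω_n² P_{ℌ_n}(x), is well-defined (the series converges in ℌ for every x), bounded, 𝔄-linear, self-adjoint, and positive; indeed 𝒮_𝒢 = 𝒯_𝒢* 𝒯_𝒢, where 𝒯_𝒢 : ℌ → l₂(ℌ) is the synthesis operator x ↦ (ω_n P_{ℌ_n}(x))_n. -/

import Mathlib

open scoped InnerProductSpace RightActions

/-- The December 2024 Mathlib `CStarModule` (right `𝔄`-module via `𝔄ᵐᵒᵖ`, inner product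
`𝔄`-linear on the right: `⟪x, y <• a⟫ = ⟪x, y⟫ * a`), whose meaning Mathlib has since changed. -/
class CStarModuleRight (A E : Type*) [NonUnitalSemiring A] [StarRing A] [Module ℂ A]
    [AddCommGroup E] [Module ℂ E] [PartialOrder A] [SMul Aᵐᵒᵖ E] [Norm A] [Norm E]
    extends Inner A E where
  inner_add_right {x} {y} {z} : inner x (y + z) = inner x y + inner x z
  inner_self_nonneg {x} : 0 ≤ inner x x
  inner_self {x} : inner x x = 0 ↔ x = 0
  inner_op_smul_right {a : A} {x y : E} : inner x (y <• a) = inner x y * a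
  inner_smul_right_complex {z : ℂ} {x} {y} : inner x (z • y) = z • inner x y
  star_inner x y : star (inner x y) = inner y x
  norm_eq_sqrt_norm_inner_self x : ‖x‖ = √‖inner x x‖

variable {𝔄 : Type*} [CStarAlgebra 𝔄] [PartialOrder 𝔄] [StarOrderedRing 𝔄]
variable {H : Type*} [NormedAddCommGroup H] [NormedSpace ℂ H] [Module 𝔄ᵐᵒᵖ H]
  [CStarModuleRight 𝔄 H] [CompleteSpace H]

/-- An element of a C*-algebra is *strictly positive* if it is positive and invertible. -/
def IsStrictlyPositive' (a : 𝔄) : Prop := 0 ≤ a ∧ IsUnit a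

/-- A *weight* of the C*-algebra `𝔄` is a sequence of central strictly positive elements. -/
def IsWeight (ω : ℕ → 𝔄) : Prop :=
  ∀ n, ω n ∈ Set.center 𝔄 ∧ IsStrictlyPositive' (ω n)

/-- `P` is the orthogonal projection of the Hilbert `𝔄`-module `H` onto the orthogonally
complemented submodule `K`: a bounded `𝔄`-linear idempotent which is self-adjoint with
respect to the `𝔄`-valued inner product and has range `K`. -/
def IsOrthoProjectionOnto (P : H →L[ℂ] H) (K : Submodule 𝔄ᵐᵒᵖ H) : Prop :=
  (∀ (a : 𝔄) (x : H), P (x <• a) = (P x) <• a) ∧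
  (∀ x, P (P x) = P x) ∧
  (∀ x y : H, ⟪P x, y⟫_𝔄 = ⟪x, P y⟫_𝔄) ∧
  (∀ x, P x ∈ K) ∧ (∀ x ∈ K, P x = x)

/-- The weighted sequence of orthogonally complemented submodules whose orthogonal
projections are `P n` is a *-fusion frame of `H` with lower bound `A` and upper bound `B`. -/
def IsFusionFrameWith (P : ℕ → H →L[ℂ] H) (ω : ℕ → 𝔄) (A B : 𝔄) : Prop :=
  IsStrictlyPositive' A ∧ IsStrictlyPositive' B ∧
  ∀ x : H, Summable (fun n => ω n ^ 2 * ⟪P n x, P n x⟫_𝔄) ∧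
    ⟪x <• A, x <• A⟫_𝔄 ≤ ∑' n, ω n ^ 2 * ⟪P n x, P n x⟫_𝔄 ∧
    (∑' n, ω n ^ 2 * ⟪P n x, P n x⟫_𝔄) ≤ ⟪x <• B, x <• B⟫_𝔄

/-- A *-fusion frame (with some pair of strictly positive bounds). -/
def IsFusionFrame (P : ℕ → H →L[ℂ] H) (ω : ℕ → 𝔄) : Prop :=
  ∃ A B : 𝔄, IsFusionFrameWith P ω A B

/-
With `T n x := P n x <• ω n`, self-adjointness and idempotence of `P n` and centrality of `ω n`
give `⟪z, P n x <• ω n ^ 2⟫ = ⟪T n z, T n x⟫`. Hence a partial sum `s = ∑_{n ∈ t} P n x <• ω n ^ 2`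
satisfies `⟪s, s⟫ = ∑_{n ∈ t} ⟪T n s, T n x⟫`, and the `𝔄`-valued Cauchy–Schwarz inequality for the
form `(u, v) ↦ ∑_{n ∈ t} ⟪u n, v n⟫`, together with the upper frame bound `B`, yields
`‖s‖ ^ 2 ≤ ‖B‖ ^ 2 * ‖∑_{n ∈ t} ω n ^ 2 * ⟪P n x, P n x⟫‖`. So the partial sums are Cauchy and
bounded by `‖B‖ ^ 2 * ‖x‖`; the remaining properties are read off
`⟪z, S x⟫ = ∑ n, ⟪T n z, T n x⟫`.
-/

open Filter Topology

structure IsSemiInnerProduct {A E : Type*} [NonUnitalSemiring A] [StarRing A] [PartialOrder A]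
    [Add E] [SMul Aᵐᵒᵖ E] (B : E → E → A) : Prop where
  map_add_right (x y z : E) : B x (y + z) = B x y + B x z
  map_op_smul_right (a : A) (x y : E) : B x (y <• a) = B x y * a
  star_apply (x y : E) : star (B x y) = B y x
  apply_self_nonneg (x : E) : 0 ≤ B x x

namespace IsSemiInnerProduct

section Algebra

variable {A E : Type*} [NonUnitalRing A] [StarRing A] [PartialOrder A]
  [AddCommGroup E] [SMul Aᵐᵒᵖ E] {B : E → E → A}

lemma map_sub_right (hB : IsSemiInnerProduct B) (x y z : E) : B x (y - z) = B x y - B x z :=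
  map_sub (AddMonoidHom.mk' (B x) (hB.map_add_right x)) y z

lemma map_sub_left (hB : IsSemiInnerProduct B) (x y z : E) : B (x - y) z = B x z - B y z := by
  rw [← hB.star_apply, hB.map_sub_right, star_sub, hB.star_apply, hB.star_apply]

lemma map_op_smul_left (hB : IsSemiInnerProduct B) (a : A) (x y : E) :
    B (x <• a) y = star a * B x y := by
  rw [← hB.star_apply, hB.map_op_smul_right, star_mul, hB.star_apply]

end Algebra

variable {A E : Type*} [CStarAlgebra A] [PartialOrder A] [StarOrderedRing A]
  [AddCommGroup E] [SMul Aᵐᵒᵖ E] {B : E → E → A}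

-- Positivity of `B` at `x a - y c` with `a = B x y`, combined with `a⋆ B(x, x) a ≤ ‖B(x, x)‖ a⋆ a`.
lemma norm_sq_le_of_norm_lt (hB : IsSemiInnerProduct B) {x y : E} {c : ℝ}
    (hc : ‖B x x‖ < c) : ‖B x y‖ ^ 2 ≤ c * ‖B y y‖ := by
  set a := B x y
  have hyx : B y x = star a := (hB.star_apply x y).symm
  have hc₀ : 0 < c := (norm_nonneg _).trans_lt hc
  have hexpand : B (x <• a - y <• (c • 1 : A)) (x <• a - y <• (c • 1 : A)) =
      star a * B x x * a - c • (star a * a) - c • (star a * a) + c • c • B y y := by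
    simp only [hB.map_sub_left, hB.map_sub_right, hB.map_op_smul_left, hB.map_op_smul_right,
      hyx, star_smul, star_one, star_trivial]
    simp only [mul_smul_comm, smul_mul_assoc, mul_one, one_mul, mul_assoc]
    abel
  have hconj : star a * B x x * a ≤ c • (star a * a) :=
    (CStarAlgebra.star_left_conjugate_le_norm_smul (hB.star_apply x x)).trans
      (smul_le_smul_of_nonneg_right hc.le (star_mul_self_nonneg a))
  have hle : star a * a ≤ c • B y y := by
    rw [← smul_le_smul_iff_of_pos_left hc₀, ← sub_nonneg]
    convert add_nonneg (hexpand ▸ hB.apply_self_nonneg _) (sub_nonneg.2 hconj) using 1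
    abel
  have := CStarAlgebra.norm_le_norm_of_nonneg_of_le (star_mul_self_nonneg a) hle
  rwa [CStarRing.norm_star_mul_self, norm_smul, Real.norm_of_nonneg hc₀.le, ← sq] at this

-- Let `c ↓ ‖B x x‖` rather than take `c = ‖B x x‖`, which may be `0` for `x ≠ 0`.
theorem norm_sq_le (hB : IsSemiInnerProduct B) (x y : E) :
    ‖B x y‖ ^ 2 ≤ ‖B x x‖ * ‖B y y‖ := by
  have hlim : Tendsto (fun c : ℝ => c * ‖B y y‖) (𝓝[>] ‖B x x‖) (𝓝 (‖B x x‖ * ‖B y y‖)) :=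
    ((continuous_mul_const _).tendsto _).mono_left nhdsWithin_le_nhds
  exact ge_of_tendsto hlim (eventually_nhdsWithin_of_forall fun c hc => hB.norm_sq_le_of_norm_lt hc)

end IsSemiInnerProduct

namespace CStarModuleRight

variable {A E : Type*} [CStarAlgebra A] [PartialOrder A]
  [NormedAddCommGroup E] [NormedSpace ℂ E] [Module Aᵐᵒᵖ E] [CStarModuleRight A E]

def innerAddHom (x : E) : E →+ A :=
  AddMonoidHom.mk' (fun y => ⟪x, y⟫_A) fun _ _ => inner_add_right

lemma inner_sum_right {ι : Type*} (t : Finset ι) (x : E) (y : ι → E) :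
    ⟪x, ∑ i ∈ t, y i⟫_A = ∑ i ∈ t, ⟪x, y i⟫_A :=
  map_sum (innerAddHom x) y t

lemma inner_op_smul_left (a : A) (x y : E) : ⟪x <• a, y⟫_A = star a * ⟪x, y⟫_A := by
  rw [← star_inner, inner_op_smul_right, star_mul, star_inner]

lemma inner_op_smul_op_smul_of_mem_center {w : A} (hw : w ∈ Set.center A)
    (hw' : IsSelfAdjoint w) (x y : E) : ⟪x <• w, y <• w⟫_A = w ^ 2 * ⟪x, y⟫_A := by
  rw [inner_op_smul_left, inner_op_smul_right, hw'.star_eq,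
    ← (Set.mem_center_iff.mp hw).comm, ← mul_assoc, sq]

lemma _root_.IsOrthoProjectionOnto.inner_op_smul_sq {P : E →L[ℂ] E} {K : Submodule Aᵐᵒᵖ E}
    (hP : IsOrthoProjectionOnto P K) {w : A} (hw : w ∈ Set.center A) (hw' : IsSelfAdjoint w)
    (z x : E) : ⟪z, P x <• w ^ 2⟫_A = ⟪P z <• w, P x <• w⟫_A := by
  have hPz : ⟪P z, P x⟫_A = ⟪z, P x⟫_A := by rw [hP.2.2.1, hP.2.1]
  rw [inner_op_smul_op_smul_of_mem_center hw hw', inner_op_smul_right, hPz,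
    ((Set.mem_center_iff.mp hw).comm _).pow_left]

lemma ext_inner_left {u v : E} (h : ∀ z, ⟪z, u⟫_A = ⟪z, v⟫_A) : u = v := by
  rw [← sub_eq_zero, ← inner_self (A := A)]
  exact (map_sub (innerAddHom (A := A) (u - v)) u v).trans (sub_eq_zero.2 (h (u - v)))

instance : SMulCommClass ℂ Aᵐᵒᵖ E where
  smul_comm c a x := ext_inner_left (A := A) fun z => by
    rw [← MulOpposite.op_unop a, inner_smul_right_complex, inner_op_smul_right,
      inner_op_smul_right, inner_smul_right_complex, smul_mul_assoc]

lemma isSemiInnerProduct_inner : IsSemiInnerProduct (fun x y : E => ⟪x, y⟫_A) where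
  map_add_right _ _ _ := inner_add_right
  map_op_smul_right _ _ _ := inner_op_smul_right
  star_apply := star_inner
  apply_self_nonneg _ := inner_self_nonneg

lemma norm_sq_eq (x : E) : ‖x‖ ^ 2 = ‖⟪x, x⟫_A‖ := by
  rw [norm_eq_sqrt_norm_inner_self (A := A) x, Real.sq_sqrt (norm_nonneg _)]

lemma norm_op_smul_le (x : E) (a : A) : ‖x <• a‖ ≤ ‖x‖ * ‖a‖ := by
  refine (pow_le_pow_iff_left₀ (norm_nonneg _) (by positivity) two_ne_zero).mp ?_
  rw [norm_sq_eq (A := A), inner_op_smul_left, inner_op_smul_right, mul_pow, norm_sq_eq (A := A)]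
  calc ‖star a * (⟪x, x⟫_A * a)‖ ≤ ‖a‖ * (‖⟪x, x⟫_A‖ * ‖a‖) := by
        refine (norm_mul_le _ _).trans ?_
        rw [norm_star]
        gcongr
        exact norm_mul_le _ _
    _ = ‖⟪x, x⟫_A‖ * ‖a‖ ^ 2 := by ring

instance : ContinuousConstSMul Aᵐᵒᵖ E where
  continuous_const_smul a := AddMonoidHomClass.continuous_of_bound
    (DistribSMul.toAddMonoidHom E a) ‖a.unop‖ fun x => by
      rw [mul_comm]
      exact norm_op_smul_le x a.unop

variable [StarOrderedRing A]

lemma isSemiInnerProduct_sum_inner {ι : Type*} (t : Finset ι) :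
    IsSemiInnerProduct (fun u v : ι → E => ∑ i ∈ t, ⟪u i, v i⟫_A) where
  map_add_right _ _ _ := by simp only [Pi.add_apply, inner_add_right, Finset.sum_add_distrib]
  map_op_smul_right _ _ _ := by simp only [Pi.smul_apply, inner_op_smul_right, Finset.sum_mul]
  star_apply _ _ := by simp only [star_sum, star_inner]
  apply_self_nonneg _ := Finset.sum_nonneg fun _ _ => inner_self_nonneg

lemma norm_sum_inner_sq_le {ι : Type*} (t : Finset ι) (u v : ι → E) :
    ‖∑ i ∈ t, ⟪u i, v i⟫_A‖ ^ 2 ≤ ‖∑ i ∈ t, ⟪u i, u i⟫_A‖ * ‖∑ i ∈ t, ⟪v i, v i⟫_A‖ :=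
  (isSemiInnerProduct_sum_inner t).norm_sq_le u v

lemma norm_inner_le (x y : E) : ‖⟪x, y⟫_A‖ ≤ ‖x‖ * ‖y‖ := by
  refine (pow_le_pow_iff_left₀ (norm_nonneg _) (by positivity) two_ne_zero).mp ?_
  rw [mul_pow, norm_sq_eq (A := A) x, norm_sq_eq (A := A) y]
  exact isSemiInnerProduct_inner.norm_sq_le x y

lemma continuous_inner_right (x : E) : Continuous fun y : E => ⟪x, y⟫_A :=
  AddMonoidHomClass.continuous_of_bound (innerAddHom x) ‖x‖ (norm_inner_le x)

end CStarModuleRight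

lemma CStarAlgebra.norm_sum_le_norm_tsum_of_nonneg {A ι : Type*} [CStarAlgebra A] [PartialOrder A]
    [StarOrderedRing A] {f : ι → A} (hf : Summable f) (hf₀ : ∀ i, 0 ≤ f i) (t : Finset ι) :
    ‖∑ i ∈ t, f i‖ ≤ ‖∑' i, f i‖ :=
  CStarAlgebra.norm_le_norm_of_nonneg_of_le (Finset.sum_nonneg fun i _ => hf₀ i)
    (hf.sum_le_tsum t fun i _ => hf₀ i)

namespace CStarModuleRight

variable {A E ι : Type*} [CStarAlgebra A] [PartialOrder A] [StarOrderedRing A]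
  [NormedAddCommGroup E] [NormedSpace ℂ E] [Module Aᵐᵒᵖ E] [CStarModuleRight A E]
  {T R : ι → E → E} {C : ℝ}

lemma hasSum_inner_tsum_of_inner_eq (hR : ∀ i z x, ⟪z, R i x⟫_A = ⟪T i z, T i x⟫_A)
    {x : E} (hx : Summable fun i => R i x) (z : E) :
    HasSum (fun i => ⟪T i z, T i x⟫_A) ⟪z, ∑' i, R i x⟫_A := by
  simpa only [Function.comp_def, innerAddHom, AddMonoidHom.mk'_apply, hR] using
    hx.hasSum.map (innerAddHom (A := A) z) (continuous_inner_right z)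

-- `R i` stands for `(T i)⋆ ∘ T i`, encoded by `hR`.
variable (hR : ∀ i z x, ⟪z, R i x⟫_A = ⟪T i z, T i x⟫_A)
  (hsum : ∀ x, Summable fun i => ⟪T i x, T i x⟫_A)
  (hbound : ∀ x, ‖∑' i, ⟪T i x, T i x⟫_A‖ ≤ C ^ 2 * ‖x‖ ^ 2)
include hR hsum hbound

lemma norm_sum_sq_le_of_inner_eq (t : Finset ι) (x : E) :
    ‖∑ i ∈ t, R i x‖ ^ 2 ≤ C ^ 2 * ‖∑ i ∈ t, ⟪T i x, T i x⟫_A‖ := by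
  have hC : ∀ y, ‖∑ i ∈ t, ⟪T i y, T i y⟫_A‖ ≤ C ^ 2 * ‖y‖ ^ 2 := fun y =>
    (CStarAlgebra.norm_sum_le_norm_tsum_of_nonneg (hsum y) (fun _ => inner_self_nonneg) t).trans
      (hbound y)
  set s := ∑ i ∈ t, R i x
  have hs : ‖s‖ ^ 2 = ‖∑ i ∈ t, ⟪T i s, T i x⟫_A‖ := by
    rw [norm_sq_eq (A := A), inner_sum_right]
    simp only [hR]
  have hcs : ‖s‖ ^ 2 * ‖s‖ ^ 2 ≤ ‖s‖ ^ 2 * (C ^ 2 * ‖∑ i ∈ t, ⟪T i x, T i x⟫_A‖) := by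
    calc ‖s‖ ^ 2 * ‖s‖ ^ 2 = ‖∑ i ∈ t, ⟪T i s, T i x⟫_A‖ ^ 2 := by rw [hs, sq]
      _ ≤ ‖∑ i ∈ t, ⟪T i s, T i s⟫_A‖ * ‖∑ i ∈ t, ⟪T i x, T i x⟫_A‖ :=
        norm_sum_inner_sq_le t _ _
      _ ≤ C ^ 2 * ‖s‖ ^ 2 * ‖∑ i ∈ t, ⟪T i x, T i x⟫_A‖ := by gcongr; exact hC s
      _ = _ := by ring
  rcases (sq_nonneg ‖s‖).eq_or_lt with hs₀ | hs₀
  · rw [← hs₀]; positivity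
  · exact le_of_mul_le_mul_left hcs hs₀

lemma summable_of_inner_eq [CompleteSpace E] (x : E) : Summable fun i => R i x := by
  refine summable_iff_vanishing_norm.2 fun ε hε => ?_
  obtain ⟨s₀, hs₀⟩ := summable_iff_vanishing_norm.1 (hsum x) (ε ^ 2 / (C ^ 2 + 1)) (by positivity)
  refine ⟨s₀, fun t ht => (pow_lt_pow_iff_left₀ (norm_nonneg _) hε.le two_ne_zero).1 ?_⟩
  calc ‖∑ i ∈ t, R i x‖ ^ 2 ≤ C ^ 2 * ‖∑ i ∈ t, ⟪T i x, T i x⟫_A‖ :=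
        norm_sum_sq_le_of_inner_eq hR hsum hbound t x
    _ ≤ C ^ 2 * (ε ^ 2 / (C ^ 2 + 1)) := by gcongr; exact (hs₀ t ht).le
    _ < ε ^ 2 := by
        rw [mul_div_assoc', div_lt_iff₀ (by positivity)]
        nlinarith [sq_nonneg C, pow_pos hε 2]

lemma norm_tsum_le_of_inner_eq [CompleteSpace E] (x : E) : ‖∑' i, R i x‖ ≤ C ^ 2 * ‖x‖ := by
  refine le_of_tendsto' (summable_of_inner_eq hR hsum hbound x).hasSum.norm fun t => ?_
  refine (pow_le_pow_iff_left₀ (norm_nonneg _) (by positivity) two_ne_zero).1 ?_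
  calc ‖∑ i ∈ t, R i x‖ ^ 2 ≤ C ^ 2 * ‖∑ i ∈ t, ⟪T i x, T i x⟫_A‖ :=
        norm_sum_sq_le_of_inner_eq hR hsum hbound t x
    _ ≤ C ^ 2 * (C ^ 2 * ‖x‖ ^ 2) := by
        gcongr
        exact (CStarAlgebra.norm_sum_le_norm_tsum_of_nonneg (hsum x) (fun _ => inner_self_nonneg)
          t).trans (hbound x)
    _ = (C ^ 2 * ‖x‖) ^ 2 := by ring

end CStarModuleRight

open CStarModuleRight

section FusionFrame

variable {A E : Type*} [CStarAlgebra A] [PartialOrder A] [StarOrderedRing A]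
  [NormedAddCommGroup E] [NormedSpace ℂ E] [Module Aᵐᵒᵖ E] [CStarModuleRight A E]
  {P : ℕ → E →L[ℂ] E} {ω : ℕ → A} {A₀ B : A}

lemma IsWeight.isSelfAdjoint (hw : IsWeight ω) (n : ℕ) : IsSelfAdjoint (ω n) :=
  .of_nonneg (hw n).2.1

lemma IsWeight.inner_op_smul_op_smul (hw : IsWeight ω) (n : ℕ) (x y : E) :
    ⟪x <• ω n, y <• ω n⟫_A = ω n ^ 2 * ⟪x, y⟫_A :=
  inner_op_smul_op_smul_of_mem_center (hw n).1 (hw.isSelfAdjoint n) x y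

lemma IsFusionFrameWith.summable_inner (h : IsFusionFrameWith P ω A₀ B) (hw : IsWeight ω)
    (x : E) : Summable fun n => ⟪P n x <• ω n, P n x <• ω n⟫_A := by
  simpa only [hw.inner_op_smul_op_smul] using (h.2.2 x).1

lemma IsFusionFrameWith.norm_tsum_inner_le (h : IsFusionFrameWith P ω A₀ B) (hw : IsWeight ω)
    (x : E) : ‖∑' n, ⟪P n x <• ω n, P n x <• ω n⟫_A‖ ≤ ‖B‖ ^ 2 * ‖x‖ ^ 2 := by
  obtain ⟨-, hlower, hupper⟩ := h.2.2 x
  simp only [hw.inner_op_smul_op_smul]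
  calc _ ≤ ‖⟪x <• B, x <• B⟫_A‖ :=
        CStarAlgebra.norm_le_norm_of_nonneg_of_le (inner_self_nonneg.trans hlower) hupper
    _ = ‖x <• B‖ ^ 2 := (norm_sq_eq _).symm
    _ ≤ (‖x‖ * ‖B‖) ^ 2 := by gcongr; exact norm_op_smul_le x B
    _ = ‖B‖ ^ 2 * ‖x‖ ^ 2 := by ring

end FusionFrame

/-- Theorem 3.4 (first part): if `((ℌ_n, ω_n))_n` is a *-fusion frame of `H`, then the frame
operator `S : H → H`, `x ↦ ∑_n ω_n² • P_{ℌ_n} x`, is a well-defined bounded `𝔄`-linear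
self-adjoint positive operator, and `S = 𝒯* 𝒯` where `𝒯` is the synthesis operator. -/
theorem fusionFrame_frameOperator_wellDefined
    (P : ℕ → H →L[ℂ] H) (ℌ : ℕ → Submodule 𝔄ᵐᵒᵖ H) (ω : ℕ → 𝔄)
    (hproj : ∀ n, IsOrthoProjectionOnto (P n) (ℌ n))
    (hw : IsWeight ω) (hframe : IsFusionFrame P ω)
    (S : H → H) (hS : ∀ x, S x = ∑' n, (P n x) <• (ω n ^ 2)) :
    -- well-defined: the series converges for every `x`
    (∀ x : H, Summable (fun n => (P n x) <• (ω n ^ 2))) ∧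
    -- bounded
    (∃ C : ℝ, 0 < C ∧ ∀ x : H, ‖S x‖ ≤ C * ‖x‖) ∧
    -- additive and `𝔄`-linear (and `ℂ`-linear)
    (∀ x y : H, S (x + y) = S x + S y) ∧
    (∀ (c : ℂ) (x : H), S (c • x) = c • S x) ∧
    (∀ (a : 𝔄) (x : H), S (x <• a) = (S x) <• a) ∧
    -- self-adjoint
    (∀ x y : H, ⟪S x, y⟫_𝔄 = ⟪x, S y⟫_𝔄) ∧
    -- positive
    (∀ x : H, 0 ≤ ⟪x, S x⟫_𝔄) ∧
    -- `S = 𝒯* 𝒯`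
    (∀ x y : H, ⟪x, S y⟫_𝔄 = ∑' n, ⟪(P n x) <• ω n, (P n y) <• ω n⟫_𝔄) := by
  obtain ⟨_, B, hframe⟩ := hframe
  have hR : ∀ n z x, ⟪z, P n x <• ω n ^ 2⟫_𝔄 = ⟪P n z <• ω n, P n x <• ω n⟫_𝔄 :=
    fun n => (hproj n).inner_op_smul_sq (hw n).1 (hw.isSelfAdjoint n)
  have hsum := hframe.summable_inner hw
  have hbound := hframe.norm_tsum_inner_le hw
  have hsummable := summable_of_inner_eq hR hsum hbound
  have hinner : ∀ x y, HasSum (fun n => ⟪P n x <• ω n, P n y <• ω n⟫_𝔄) ⟪x, S y⟫_𝔄 :=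
    fun x y => hS y ▸ hasSum_inner_tsum_of_inner_eq hR (hsummable y) x
  refine ⟨hsummable, ⟨‖B‖ ^ 2 + 1, by positivity, fun x => ?_⟩, fun x y => ?_, fun c x => ?_,
    fun a x => ?_, fun x y => ?_, fun x => (hinner x x).nonneg fun _ => inner_self_nonneg,
    fun x y => (hinner x y).tsum_eq.symm⟩
  · rw [hS]
    exact (norm_tsum_le_of_inner_eq hR hsum hbound x).trans (by gcongr; linarith)
  · simp only [hS, map_add, smul_add]
    exact (hsummable x).tsum_add (hsummable y)
  · have hcomm : ∀ n, P n (c • x) <• ω n ^ 2 = c • (P n x <• ω n ^ 2) := fun n => by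
      rw [map_smul]; exact (smul_comm c _ _).symm
    simp only [hS, hcomm]
    exact (hsummable x).tsum_const_smul c
  · have hcomm : ∀ n, P n (x <• a) <• ω n ^ 2 = (P n x <• ω n ^ 2) <• a := fun n => by
      rw [(hproj n).1, smul_smul, smul_smul, ← MulOpposite.op_mul, ← MulOpposite.op_mul,
        ((Set.mem_center_iff.mp (hw n).1).comm a).pow_left]
    simp only [hS, hcomm]
    exact (hsummable x).tsum_const_smul _
  · exact (by simpa only [star_inner] using (hinner y x).star : HasSum _ ⟪S x, y⟫_𝔄).unique
      (hinner x y)
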